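/- Let U ⊆ ℝ² be open and w : U → ℝ a smooth solution of the reduced equation. Then the functions I¹ := ∂₁∂₂w + ½(∂₂²w)² and I² := ∂₁²w − (1/3)(∂₂²w)³ − z₂·(∂₁²∂₂w + (∂₂²w)·(∂₁∂₂²w)) satisfy ∂₂I¹ = 0 and ∂₂I² = 0 on U; i.e. I¹ and I² are z₂-integrals of the reduced equation. -/

import Mathlib

/-!
On a solution, `u := ∂₂²w` solves the inviscid Burgers equation `∂₁u + u ∂₂u = 0`. Since partial
derivatives of a smooth function commute, `∂₂I¹ = ∂₁u + u ∂₂u = 0`. For the second integral,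
`∂₂I² = -u (∂₁u + u ∂₂u) - z₂ ∂₂E` with `E = ∂₁²∂₂w + u ∂₁u`, and `∂₂E = ∂₁(∂₁u) + ∂₂(u ∂₁u)`
vanishes because differentiating the Burgers equation in `z₁` turns it into a conservation law
for `∂₁u` with flux `u ∂₁u`.
-/

/-- First-coordinate partial derivative of a function on `ℝ²`. -/
noncomputable def d1 (f : ℝ × ℝ → ℝ) (p : ℝ × ℝ) : ℝ := deriv (fun s => f (s, p.2)) p.1

/-- Second-coordinate partial derivative of a function on `ℝ²`. -/
noncomputable def d2 (f : ℝ × ℝ → ℝ) (p : ℝ × ℝ) : ℝ := deriv (fun s => f (p.1, s)) p.2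

/-- `w` is a smooth solution of the reduced equation `∂₁∂₂²w + (∂₂²w)·(∂₂³w) = 0` on `U`. -/
def IsRedSolOn (w : ℝ × ℝ → ℝ) (U : Set (ℝ × ℝ)) : Prop :=
  ContDiffOn ℝ (⊤ : ℕ∞) w U ∧
    ∀ p ∈ U, d1 (d2 (d2 w)) p + d2 (d2 w) p * d2 (d2 (d2 w)) p = 0

/-- `h` is a smooth solution of the inviscid Burgers equation `∂₁h + h·∂₂h = 0` on `U`. -/
def IsBurgersSolOn (h : ℝ × ℝ → ℝ) (U : Set (ℝ × ℝ)) : Prop :=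
  ContDiffOn ℝ (⊤ : ℕ∞) h U ∧ ∀ p ∈ U, d1 h p + h p * d2 h p = 0

open Filter Topology

variable {f g : ℝ × ℝ → ℝ} {p : ℝ × ℝ} {U : Set (ℝ × ℝ)}

lemma hasDerivAt_d1 (hf : DifferentiableAt ℝ f p) :
    HasDerivAt (fun s => f (s, p.2)) (d1 f p) p.1 :=
  (hf.comp p.1 (differentiableAt_id.prodMk (differentiableAt_const _))).hasDerivAt

lemma hasDerivAt_d2 (hf : DifferentiableAt ℝ f p) :
    HasDerivAt (fun s => f (p.1, s)) (d2 f p) p.2 :=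
  (hf.comp p.2 ((differentiableAt_const _).prodMk differentiableAt_id)).hasDerivAt

lemma d1_eq_fderiv (hf : DifferentiableAt ℝ f p) : d1 f p = fderiv ℝ f p (1, 0) :=
  (hf.hasFDerivAt.comp_hasDerivAt p.1
    ((hasDerivAt_id p.1).prodMk (hasDerivAt_const p.1 p.2))).deriv

lemma d2_eq_fderiv (hf : DifferentiableAt ℝ f p) : d2 f p = fderiv ℝ f p (0, 1) :=
  (hf.hasFDerivAt.comp_hasDerivAt p.2
    ((hasDerivAt_const p.2 p.1).prodMk (hasDerivAt_id p.2))).deriv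

lemma d1_add (hf : DifferentiableAt ℝ f p) (hg : DifferentiableAt ℝ g p) :
    d1 (fun q => f q + g q) p = d1 f p + d1 g p :=
  ((hasDerivAt_d1 hf).add (hasDerivAt_d1 hg)).deriv

lemma d1_mul (hf : DifferentiableAt ℝ f p) (hg : DifferentiableAt ℝ g p) :
    d1 (fun q => f q * g q) p = d1 f p * g p + f p * d1 g p :=
  ((hasDerivAt_d1 hf).mul (hasDerivAt_d1 hg)).deriv

lemma d2_add (hf : DifferentiableAt ℝ f p) (hg : DifferentiableAt ℝ g p) :
    d2 (fun q => f q + g q) p = d2 f p + d2 g p :=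
  ((hasDerivAt_d2 hf).add (hasDerivAt_d2 hg)).deriv

lemma d2_sub (hf : DifferentiableAt ℝ f p) (hg : DifferentiableAt ℝ g p) :
    d2 (fun q => f q - g q) p = d2 f p - d2 g p :=
  ((hasDerivAt_d2 hf).sub (hasDerivAt_d2 hg)).deriv

lemma d2_mul (hf : DifferentiableAt ℝ f p) (hg : DifferentiableAt ℝ g p) :
    d2 (fun q => f q * g q) p = d2 f p * g p + f p * d2 g p :=
  ((hasDerivAt_d2 hf).mul (hasDerivAt_d2 hg)).deriv

lemma d2_const_mul (c : ℝ) (hf : DifferentiableAt ℝ f p) :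
    d2 (fun q => c * f q) p = c * d2 f p :=
  ((hasDerivAt_d2 hf).const_mul c).deriv

lemma d2_pow (n : ℕ) (hf : DifferentiableAt ℝ f p) :
    d2 (fun q => f q ^ n) p = n * f p ^ (n - 1) * d2 f p :=
  ((hasDerivAt_d2 hf).pow n).deriv

lemma d2_snd : d2 Prod.snd p = 1 :=
  (hasDerivAt_id p.2).deriv

lemma d1_congr (h : f =ᶠ[𝓝 p] g) : d1 f p = d1 g p :=
  (h.comp_tendsto (by fun_prop : ContinuousAt (fun s : ℝ => (s, p.2)) p.1)).deriv_eq

lemma d2_congr (h : f =ᶠ[𝓝 p] g) : d2 f p = d2 g p :=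
  (h.comp_tendsto (by fun_prop : ContinuousAt (fun s : ℝ => (p.1, s)) p.2)).deriv_eq

lemma ContDiffOn.differentiableAt_of_isOpen (hf : ContDiffOn ℝ (⊤ : ℕ∞) f U) (hU : IsOpen U)
    (hp : p ∈ U) : DifferentiableAt ℝ f p :=
  (hf.contDiffAt (hU.mem_nhds hp)).differentiableAt (by simp)

lemma ContDiffOn.d1 (hf : ContDiffOn ℝ (⊤ : ℕ∞) f U) (hU : IsOpen U) :
    ContDiffOn ℝ (⊤ : ℕ∞) (d1 f) U :=
  ((hf.fderiv_of_isOpen hU (by simp)).clm_apply contDiffOn_const).congr fun _ hq =>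
    d1_eq_fderiv (hf.differentiableAt_of_isOpen hU hq)

lemma ContDiffOn.d2 (hf : ContDiffOn ℝ (⊤ : ℕ∞) f U) (hU : IsOpen U) :
    ContDiffOn ℝ (⊤ : ℕ∞) (d2 f) U :=
  ((hf.fderiv_of_isOpen hU (by simp)).clm_apply contDiffOn_const).congr fun _ hq =>
    d2_eq_fderiv (hf.differentiableAt_of_isOpen hU hq)

lemma d1_congr_of_eqOn (hU : IsOpen U) (h : Set.EqOn f g U) (hp : p ∈ U) : d1 f p = d1 g p :=
  d1_congr (eventuallyEq_of_mem (hU.mem_nhds hp) h)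

lemma d1_d2_comm (hf : ContDiffOn ℝ (⊤ : ℕ∞) f U) (hU : IsOpen U) (hp : p ∈ U) :
    d1 (d2 f) p = d2 (d1 f) p := by
  have hfp := hf.contDiffAt (hU.mem_nhds hp)
  have hF : DifferentiableAt ℝ (fderiv ℝ f) p :=
    (hfp.fderiv_right (m := 1) (by norm_cast)).differentiableAt one_ne_zero
  have hsymm : IsSymmSndFDerivAt ℝ f p :=
    hfp.isSymmSndFDerivAt (by simp only [minSmoothness_of_isRCLikeNormedField]; norm_cast)
  have hpartial (v u : ℝ × ℝ) :
      fderiv ℝ (fun q => fderiv ℝ f q v) p u = fderiv ℝ (fderiv ℝ f) p u v := by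
    simp [fderiv_clm_apply hF (differentiableAt_const v)]
  have hdiff : ∀ᶠ q in 𝓝 p, DifferentiableAt ℝ f q :=
    eventually_of_mem (hU.mem_nhds hp) fun _ hq => hf.differentiableAt_of_isOpen hU hq
  calc d1 (d2 f) p = d1 (fun q => fderiv ℝ f q (0, 1)) p :=
        d1_congr (hdiff.mono fun _ => d2_eq_fderiv)
    _ = fderiv ℝ (fderiv ℝ f) p (1, 0) (0, 1) :=
        (d1_eq_fderiv (hF.clm_apply (differentiableAt_const _))).trans (hpartial _ _)
    _ = fderiv ℝ (fderiv ℝ f) p (0, 1) (1, 0) := hsymm _ _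
    _ = d2 (fun q => fderiv ℝ f q (1, 0)) p :=
        ((d2_eq_fderiv (hF.clm_apply (differentiableAt_const _))).trans (hpartial _ _)).symm
    _ = d2 (d1 f) p := (d2_congr (hdiff.mono fun _ => d1_eq_fderiv)).symm

lemma d2_d1_d1_comm (hf : ContDiffOn ℝ (⊤ : ℕ∞) f U) (hU : IsOpen U) (hp : p ∈ U) :
    d2 (d1 (d1 f)) p = d1 (d1 (d2 f)) p := by
  rw [← d1_d2_comm (hf.d1 hU) hU hp]
  exact d1_congr_of_eqOn hU (fun q hq => (d1_d2_comm hf hU hq).symm) hp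

lemma IsRedSolOn.isBurgersSolOn_d2_d2 {w : ℝ × ℝ → ℝ} (hw : IsRedSolOn w U) (hU : IsOpen U) :
    IsBurgersSolOn (d2 (d2 w)) U :=
  ⟨(hw.1.d2 hU).d2 hU, hw.2⟩

lemma IsBurgersSolOn.d1_d1_add_d2_mul_d1 {h : ℝ × ℝ → ℝ} (hh : IsBurgersSolOn h U)
    (hU : IsOpen U) (hp : p ∈ U) : d1 (d1 h) p + d2 (fun q => h q * d1 h q) p = 0 := by
  obtain ⟨hsmooth, heq⟩ := hh
  have h0 := hsmooth.differentiableAt_of_isOpen hU hp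
  have h1 := (hsmooth.d1 hU).differentiableAt_of_isOpen hU hp
  have h2 := (hsmooth.d2 hU).differentiableAt_of_isOpen hU hp
  have hd1 : d1 (fun q => d1 h q + h q * d2 h q) p = 0 :=
    (d1_congr_of_eqOn (g := fun _ => 0) hU heq hp).trans (deriv_const _ _)
  rw [d1_add h1 (by fun_prop), d1_mul h0 h2] at hd1
  rw [d2_mul h0 h1, ← d1_d2_comm hsmooth hU hp]
  linear_combination hd1

/-- The differential functions `I¹ = ∂₁∂₂w + ½(∂₂²w)²` and
`I² = ∂₁²w − ⅓(∂₂²w)³ − z₂·(∂₁²∂₂w + (∂₂²w)·(∂₁∂₂²w))` are `z₂`-integrals of the reduced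
equation along any smooth solution `w` on an open set `U`. -/
theorem statement14 (U : Set (ℝ × ℝ)) (hU : IsOpen U) (w : ℝ × ℝ → ℝ)
    (hred : IsRedSolOn w U) :
    (∀ p ∈ U, d2 (fun q => d1 (d2 w) q + (1 / 2) * (d2 (d2 w) q) ^ 2) p = 0) ∧
    (∀ p ∈ U, d2 (fun q => d1 (d1 w) q - (1 / 3) * (d2 (d2 w) q) ^ 3
        - q.2 * (d1 (d1 (d2 w)) q + d2 (d2 w) q * d1 (d2 (d2 w)) q)) p = 0) := by
  have hw := hred.1
  have hw2 := hw.d2 hU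
  have hu := hw2.d2 hU
  refine ⟨fun p hp => ?_, fun p hp => ?_⟩
  · have h12 := (hw2.d1 hU).differentiableAt_of_isOpen hU hp
    have h22 := hu.differentiableAt_of_isOpen hU hp
    rw [d2_add h12 (by fun_prop), d2_const_mul _ (by fun_prop), d2_pow _ h22,
      ← d1_d2_comm hw2 hU hp]
    linear_combination hred.2 p hp
  · have h11 := ((hw.d1 hU).d1 hU).differentiableAt_of_isOpen hU hp
    have h112 := ((hw2.d1 hU).d1 hU).differentiableAt_of_isOpen hU hp
    have h22 := hu.differentiableAt_of_isOpen hU hp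
    have h122 := (hu.d1 hU).differentiableAt_of_isOpen hU hp
    have hE : d2 (fun q => d1 (d1 (d2 w)) q + d2 (d2 w) q * d1 (d2 (d2 w)) q) p = 0 := by
      rw [d2_add h112 (by fun_prop), d2_d1_d1_comm hw2 hU hp]
      exact (hred.isBurgersSolOn_d2_d2 hU).d1_d1_add_d2_mul_d1 hU hp
    rw [d2_sub (by fun_prop) (by fun_prop), d2_sub h11 (by fun_prop),
      d2_const_mul _ (by fun_prop), d2_pow _ h22, d2_mul (by fun_prop) (by fun_prop), d2_snd,
      hE, d2_d1_d1_comm hw hU hp]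
    linear_combination (-d2 (d2 w) p) * hred.2 p hp
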